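/- Suppose G is an SG-basis for an ideal I of A. Then an element a ∈ A belongs to I if and only if a si-reduces to 0 via G. -/

import Mathlib

/-!
Si-reduction only ever subtracts elements of the ideal of `A` generated by `G`, so anything that
si-reduces to `0` lies in `I`.

Conversely, let `b ∈ I` be nonzero. The SG-basis property writes `lt(b)` as an `R[Lt A]`-linear
combination of the `lt(g)`, `g ∈ G`. Over a domain `lt` is multiplicative and `lt(r) = r` for
`r ∈ R`, so the leading terms of elements of `A` form a multiplicative set closed under scalars,
and `R[Lt A]` is just their additive span; hence `lt(b) = ∑ lt(aᵢ gᵢ)` with `aᵢ ∈ A`, `gᵢ ∈ G`.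
Keeping only the summands of power product `lp(b)` gives a one-step si-reduction of `b` to
`b - ∑ aᵢ gᵢ ∈ I`, whose leading power product is strictly smaller; the term order is
well-founded, so iterating reaches `0`.
-/

open MvPolynomial

/-- A term order on the monomials (exponent vectors) of a polynomial ring in `n`
variables: a well-founded linear order compatible with multiplication of power
products (i.e. with addition of exponent vectors). -/
structure TermOrder (n : ℕ) where
  lo : LinearOrder (Fin n →₀ ℕ)
  wf : WellFounded lo.lt
  add_le_add : ∀ a b c : Fin n →₀ ℕ, lo.le a b → lo.le (a + c) (b + c)

namespace TermOrder

variable {n : ℕ} {R : Type*} [CommRing R]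

/-- `lp p`: the leading power product (exponent vector) of `p`; junk value `0`
for the zero polynomial. -/
noncomputable def lp (ord : TermOrder n) (p : MvPolynomial (Fin n) R) : Fin n →₀ ℕ :=
  WithBot.unbotD 0 (@Finset.max _ ord.lo p.support)

/-- `lc p`: the leading coefficient of `p` (0 if `p = 0`). -/
noncomputable def lc (ord : TermOrder n) (p : MvPolynomial (Fin n) R) : R :=
  p.coeff (ord.lp p)

/-- `ltm p`: the leading term `lc(p)·lp(p)` of `p` (0 if `p = 0`). -/
noncomputable def ltm (ord : TermOrder n) (p : MvPolynomial (Fin n) R) : MvPolynomial (Fin n) R :=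
  monomial (ord.lp p) (ord.lc p)

end TermOrder

variable {n : ℕ} {R : Type*} [CommRing R]

/-- An `F`-power product: a finite product `∏ fᵢ^{eᵢ}` with `fᵢ ∈ F`. -/
def IsPowerProduct (F : Set (MvPolynomial (Fin n) R)) (q : MvPolynomial (Fin n) R) : Prop :=
  ∃ e : MvPolynomial (Fin n) R →₀ ℕ, (e.support : Set (MvPolynomial (Fin n) R)) ⊆ F ∧
    q = e.prod (fun f k => f ^ k)

/-- `F` is a SAGBI basis for the `R`-subalgebra `A`: `R[Lt A] = R[Lt F]`. -/
def IsSAGBI (ord : TermOrder n) (A : Subalgebra R (MvPolynomial (Fin n) R))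
    (F : Set (MvPolynomial (Fin n) R)) : Prop :=
  Algebra.adjoin R (ord.ltm '' (A : Set (MvPolynomial (Fin n) R))) =
    Algebra.adjoin R (ord.ltm '' F)

/-- One step of s-reduction of `g` to `h` via `F`. -/
def SStep (ord : TermOrder n) (F : Set (MvPolynomial (Fin n) R))
    (g h : MvPolynomial (Fin n) R) : Prop :=
  ∃ (β : Fin n →₀ ℕ) (N : ℕ) (q : Fin N → MvPolynomial (Fin n) R) (r : Fin N → R),
    g.coeff β ≠ 0 ∧
    (∀ i, IsPowerProduct F (q i) ∧ q i ≠ 0 ∧ ord.lp (q i) = β) ∧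
    g.coeff β = ∑ i, r i * ord.lc (q i) ∧
    h = g - ∑ i, C (r i) * q i

/-- `g` s-reduces to `h` via `F`: a finite chain of one-step s-reductions. -/
def SReduce (ord : TermOrder n) (F : Set (MvPolynomial (Fin n) R)) :
    MvPolynomial (Fin n) R → MvPolynomial (Fin n) R → Prop :=
  Relation.ReflTransGen (SStep ord F)

/-- One step of si-reduction of `h` to `h'` via `G`, relative to the subalgebra `A`. -/
def SiStep (ord : TermOrder n) (A : Subalgebra R (MvPolynomial (Fin n) R))
    (G : Set (MvPolynomial (Fin n) R)) (h h' : MvPolynomial (Fin n) R) : Prop :=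
  ∃ (α : Fin n →₀ ℕ) (M : ℕ) (g a : Fin M → MvPolynomial (Fin n) R),
    h.coeff α ≠ 0 ∧
    (∀ i, g i ∈ G) ∧ (∀ i, a i ∈ A) ∧
    (∀ i, a i * g i ≠ 0 ∧ ord.lp (a i * g i) = α) ∧
    (monomial α (h.coeff α) : MvPolynomial (Fin n) R) = ∑ i, ord.ltm (a i * g i) ∧
    h' = h - ∑ i, a i * g i

/-- `h` si-reduces to `h'` via `G`: a finite chain of one-step si-reductions. -/
def SiReduce (ord : TermOrder n) (A : Subalgebra R (MvPolynomial (Fin n) R))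
    (G : Set (MvPolynomial (Fin n) R)) :
    MvPolynomial (Fin n) R → MvPolynomial (Fin n) R → Prop :=
  Relation.ReflTransGen (SiStep ord A G)

/-- The subalgebra `R[Lt A]` generated by the leading terms of elements of `A`. -/
noncomputable def LtAlg (ord : TermOrder n) (A : Subalgebra R (MvPolynomial (Fin n) R)) :
    Subalgebra R (MvPolynomial (Fin n) R) :=
  Algebra.adjoin R (ord.ltm '' (A : Set (MvPolynomial (Fin n) R)))

/-- The leading term of an element of `A`, as an element of `R[Lt A]`. -/
noncomputable def ltA (ord : TermOrder n) (A : Subalgebra R (MvPolynomial (Fin n) R))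
    (a : A) : LtAlg ord A :=
  ⟨ord.ltm (a : MvPolynomial (Fin n) R), Algebra.subset_adjoin ⟨a, a.2, rfl⟩⟩

/-- `G ⊆ I` is a SAGBI–Gröbner basis (SG-basis) for the ideal `I` of `A`:
`Lt G` generates the ideal `⟨Lt I⟩` in the subalgebra `R[Lt A]`. -/
def IsSGBasis (ord : TermOrder n) (A : Subalgebra R (MvPolynomial (Fin n) R))
    (I : Ideal A) (G : Set A) : Prop :=
  Ideal.span
      ((Subtype.val ⁻¹' (ord.ltm '' (Subtype.val '' G)) : Set (LtAlg ord A))) =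
  Ideal.span
      ((Subtype.val ⁻¹' (ord.ltm '' (Subtype.val '' (I : Set A))) : Set (LtAlg ord A)))


open MonomialOrder

theorem Finset.unbotD_max_eq_sup_id {α : Type*} [LinearOrder α] [OrderBot α] (s : Finset α) :
    WithBot.unbotD ⊥ s.max = s.sup id := by
  rcases s.eq_empty_or_nonempty with rfl | hs
  · simp
  · rw [← Finset.coe_max' hs, WithBot.unbotD_coe, Finset.max'_eq_sup', Finset.sup'_eq_sup]

theorem Finset.sum_eq_sum_equivFin {ι β : Type*} [AddCommMonoid β] (s : Finset ι) (F : ι → β) :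
    ∑ i ∈ s, F i = ∑ k, F (s.equivFin.symm k) := by
  rw [← s.sum_coe_sort, ← s.equivFin.symm.sum_comp]

namespace MonomialOrder

variable {σ : Type*} {m : MonomialOrder σ} {ι : Type*} {s : Finset ι}
  {f : ι → MvPolynomial σ R} {p : MvPolynomial σ R}

open scoped Classical in
theorem coeff_sum_leadingTerm (d : σ →₀ ℕ) :
    (∑ i ∈ s, m.leadingTerm (f i)).coeff d =
      ∑ i ∈ s with m.degree (f i) = d, m.leadingCoeff (f i) := by
  simp [leadingTerm, coeff_sum, coeff_monomial, Finset.sum_ite]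

theorem exists_subset_leadingTerm_eq_sum (h : m.leadingTerm p = ∑ i ∈ s, m.leadingTerm (f i)) :
    ∃ t ⊆ s, (∀ i ∈ t, m.degree (f i) = m.degree p ∧ f i ≠ 0) ∧
      m.leadingTerm p = ∑ i ∈ t, m.leadingTerm (f i) := by
  classical
  refine ⟨{i ∈ s | m.degree (f i) = m.degree p ∧ f i ≠ 0}, Finset.filter_subset _ _,
    fun i hi => (Finset.mem_filter.1 hi).2, ?_⟩
  have hcoeff : m.leadingCoeff p =
      ∑ i ∈ s with m.degree (f i) = m.degree p, m.leadingCoeff (f i) := by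
    have := congrArg (coeff (m.degree p)) h
    rwa [coeff_sum_leadingTerm, leadingTerm, coeff_monomial, if_pos rfl] at this
  rw [← Finset.filter_filter, Finset.sum_filter_of_ne (p := fun i => f i ≠ 0)
      fun i _ hi h0 => hi (by rw [h0, leadingTerm_zero]),
    Finset.sum_congr rfl fun i hi => by rw [leadingTerm, (Finset.mem_filter.1 hi).2], ← map_sum,
    ← hcoeff, leadingTerm]

theorem degree_sub_sum_lt (hdeg : ∀ i ∈ s, m.degree (f i) = m.degree p)
    (h : m.leadingTerm p = ∑ i ∈ s, m.leadingTerm (f i)) (hne : p - ∑ i ∈ s, f i ≠ 0) :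
    m.degree (p - ∑ i ∈ s, f i) ≺[m] m.degree p := by
  classical
  have hle : m.degree (∑ i ∈ s, f i) ≼[m] m.degree p :=
    m.degree_sum_le.trans (Finset.sup_le fun i hi => (congrArg m.toSyn (hdeg i hi)).le)
  have hcoeff : (∑ i ∈ s, f i).coeff (m.degree p) = p.coeff (m.degree p) := by
    have := congrArg (coeff (m.degree p)) h
    rw [coeff_sum_leadingTerm, Finset.filter_true_of_mem hdeg, leadingTerm, coeff_monomial,
      if_pos rfl] at this
    rw [coeff_sum, ← leadingCoeff, this]
    exact Finset.sum_congr rfl fun i hi => by rw [leadingCoeff, hdeg i hi]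
  refine lt_of_le_of_ne (m.degree_sub_le.trans (sup_le le_rfl hle)) fun heq => ?_
  apply m.coeff_degree_ne_zero_iff.mpr hne
  rw [m.toSyn.injective heq, coeff_sub, hcoeff, sub_self]

end MonomialOrder

namespace TermOrder

variable (ord : TermOrder n)

/-- `Fin n →₀ ℕ` already carries the pointwise order, so the term order lives on a synonym. -/
def Syn (_ : TermOrder n) : Type := Fin n →₀ ℕ

noncomputable instance : AddCommMonoid ord.Syn := inferInstanceAs (AddCommMonoid (Fin n →₀ ℕ))

instance : IsCancelAdd ord.Syn := inferInstanceAs (IsCancelAdd (Fin n →₀ ℕ))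

instance : LinearOrder ord.Syn := ord.lo

instance : IsOrderedAddMonoid ord.Syn where
  add_le_add_left a b h c := ord.add_le_add a b c h

instance : WellFoundedLT ord.Syn := ⟨ord.wf⟩

theorem zero_le (a : ord.Syn) : 0 ≤ a := by
  induction a using WellFoundedLT.induction with
  | _ a ih =>
  by_contra! ha
  have hdouble : a + a < a := by simpa using add_lt_add_left ha a
  exact (ih _ hdouble).not_gt (hdouble.trans ha)

noncomputable def toMonomialOrder : MonomialOrder (Fin n) where
  syn := ord.Syn
  toSyn := { Equiv.refl _ with map_add' := fun _ _ => rfl }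
  toSyn_monotone a b h := by
    obtain ⟨c, rfl⟩ := exists_add_of_le h
    exact le_add_of_nonneg_right (ord.zero_le c)

theorem lp_eq_degree (p : MvPolynomial (Fin n) R) : ord.lp p = ord.toMonomialOrder.degree p :=
  Finset.unbotD_max_eq_sup_id (α := ord.toMonomialOrder.syn) p.support

theorem ltm_eq_leadingTerm : ord.ltm (R := R) = ord.toMonomialOrder.leadingTerm := by
  ext1 p
  rw [ltm, lc, leadingTerm, leadingCoeff, lp_eq_degree]

theorem ltm_C (r : R) : ord.ltm (C r : MvPolynomial (Fin n) R) = C r := by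
  rw [ltm_eq_leadingTerm, leadingTerm_C]

theorem ltm_mul [NoZeroDivisors R] (p q : MvPolynomial (Fin n) R) :
    ord.ltm (p * q) = ord.ltm p * ord.ltm q := by
  rw [ltm_eq_leadingTerm, leadingTerm_mul]

end TermOrder

section LtCombination

variable (ord : TermOrder n) (A : Subalgebra R (MvPolynomial (Fin n) R)) (G : Set A)

/-- The sums `∑ lt(aᵢ gᵢ)` with `aᵢ ∈ A`, `gᵢ ∈ G`; over a domain these are exactly the
elements of the ideal `⟨Lt G⟩` of `R[Lt A]`. -/
def IsLtCombination (p : MvPolynomial (Fin n) R) : Prop :=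
  ∃ (M : ℕ) (a g : Fin M → A), (∀ i, g i ∈ G) ∧
    p = ∑ i, ord.ltm ((a i : MvPolynomial (Fin n) R) * (g i : MvPolynomial (Fin n) R))

variable {ord A G}

theorem isLtCombination_zero : IsLtCombination ord A G 0 :=
  ⟨0, finZeroElim, finZeroElim, finZeroElim, by simp⟩

theorem IsLtCombination.add {p q : MvPolynomial (Fin n) R} (hp : IsLtCombination ord A G p)
    (hq : IsLtCombination ord A G q) : IsLtCombination ord A G (p + q) := by
  obtain ⟨M, a, g, hg, rfl⟩ := hp
  obtain ⟨N, b, h, hh, rfl⟩ := hq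
  refine ⟨M + N, Fin.append a b, Fin.append g h, Fin.addCases (by simpa) (by simpa), ?_⟩
  simp [Fin.sum_univ_add]

variable [NoZeroDivisors R]

theorem IsLtCombination.ltm_mul {p : MvPolynomial (Fin n) R} (hp : IsLtCombination ord A G p)
    {b : MvPolynomial (Fin n) R} (hb : b ∈ A) : IsLtCombination ord A G (ord.ltm b * p) := by
  obtain ⟨M, a, g, hg, rfl⟩ := hp
  refine ⟨M, fun i => ⟨b, hb⟩ * a i, g, hg, ?_⟩
  simp [Finset.mul_sum, ord.ltm_mul, mul_assoc]

theorem IsLtCombination.mul_left {p : MvPolynomial (Fin n) R} (hp : IsLtCombination ord A G p)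
    {c : MvPolynomial (Fin n) R} (hc : c ∈ LtAlg ord A) : IsLtCombination ord A G (c * p) := by
  induction hc using Algebra.adjoin_induction generalizing p with
  | mem x hx =>
    obtain ⟨b, hb, rfl⟩ := hx
    exact hp.ltm_mul hb
  | algebraMap r =>
    rw [MvPolynomial.algebraMap_eq, ← ord.ltm_C]
    exact hp.ltm_mul (A.algebraMap_mem r)
  | add x y _ _ hx hy =>
    rw [add_mul]
    exact (hx hp).add (hy hp)
  | mul x y _ _ hx hy =>
    rw [mul_assoc]
    exact hx (hy hp)

theorem isLtCombination_of_mem_span {x : LtAlg ord A}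
    (hx : x ∈ Ideal.span (Subtype.val ⁻¹' (ord.ltm '' (Subtype.val '' G)))) :
    IsLtCombination ord A G x := by
  induction hx using Submodule.span_induction with
  | mem x hx =>
    obtain ⟨_, ⟨g, hg, rfl⟩, hx⟩ := hx
    exact ⟨1, fun _ => 1, fun _ => g, fun _ => hg, by simp [hx]⟩
  | zero => exact isLtCombination_zero
  | add x y _ _ hx hy => exact hx.add hy
  | smul c x _ hx => exact hx.mul_left c.2

theorem IsSGBasis.isLtCombination_ltm {I : Ideal A} (hSG : IsSGBasis ord A I G) {b : A}
    (hb : b ∈ I) : IsLtCombination ord A G (ord.ltm b) := by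
  refine isLtCombination_of_mem_span (x := ltA ord A b) ?_
  rw [hSG]
  exact Ideal.subset_span ⟨b, ⟨b, hb, rfl⟩, rfl⟩

end LtCombination

section Reduction

variable {ord : TermOrder n} {A : Subalgebra R (MvPolynomial (Fin n) R)} {G : Set A}

theorem SiReduce.exists_sub_mem_span {h h' : MvPolynomial (Fin n) R}
    (hr : SiReduce ord A (Subtype.val '' G) h h') :
    ∃ x ∈ Ideal.span G, (x : MvPolynomial (Fin n) R) = h - h' := by
  induction hr using Relation.ReflTransGen.head_induction_on with
  | refl => exact ⟨0, zero_mem _, by simp⟩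
  | head hstep _ ih =>
    obtain ⟨x, hx, hxeq⟩ := ih
    obtain ⟨α, M, g, a, -, hg, ha, -, -, rfl⟩ := hstep
    choose g' hg' hg'eq using hg
    refine ⟨x + ∑ i, ⟨a i, ha i⟩ * g' i,
      add_mem hx (sum_mem fun i _ => Ideal.mul_mem_left _ _ (Ideal.subset_span (hg' i))), ?_⟩
    simp [hxeq, hg'eq]
    ring

theorem IsLtCombination.exists_siStep {b : A} (hb0 : (b : MvPolynomial (Fin n) R) ≠ 0)
    (h : IsLtCombination ord A G (ord.ltm b)) :
    ∃ s ∈ Ideal.span G, SiStep ord A (Subtype.val '' G) b ↑(b - s) ∧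
      (((b - s : A) : MvPolynomial (Fin n) R) = 0 ∨
        ord.toMonomialOrder.degree ((b - s : A) : MvPolynomial (Fin n) R) ≺[ord.toMonomialOrder]
          ord.toMonomialOrder.degree (b : MvPolynomial (Fin n) R)) := by
  obtain ⟨M, a, g, hg, hsum⟩ := h
  rw [ord.ltm_eq_leadingTerm] at hsum
  obtain ⟨J, -, hJdeg, hJ⟩ := exists_subset_leadingTerm_eq_sum hsum
  refine ⟨∑ i ∈ J, a i * g i,
    sum_mem fun i _ => Ideal.mul_mem_left _ _ (Ideal.subset_span (hg i)), ?_, ?_⟩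
  · refine ⟨ord.lp (b : MvPolynomial (Fin n) R), J.card, fun k => g (J.equivFin.symm k),
      fun k => a (J.equivFin.symm k), ?_, fun k => ⟨_, hg _, rfl⟩, fun k => (a _).2,
      fun k => ?_, ?_, ?_⟩
    · rw [ord.lp_eq_degree]
      exact coeff_degree_ne_zero_iff.mpr hb0
    · obtain ⟨hdeg, hne⟩ := hJdeg _ (J.equivFin.symm k).2
      exact ⟨hne, by rw [ord.lp_eq_degree, ord.lp_eq_degree]; exact hdeg⟩
    · change ord.ltm (b : MvPolynomial (Fin n) R) = _
      simp only [ord.ltm_eq_leadingTerm, hJ, J.sum_eq_sum_equivFin]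
    · simp [J.sum_eq_sum_equivFin]
  · have hcoe : ((b - ∑ i ∈ J, a i * g i : A) : MvPolynomial (Fin n) R) =
        b - ∑ i ∈ J, (a i : MvPolynomial (Fin n) R) * g i := by
      push_cast
      rfl
    rw [hcoe, or_iff_not_imp_left]
    exact degree_sub_sum_lt (fun i hi => (hJdeg i hi).1) hJ

theorem IsSGBasis.siReduce_zero_of_mem [NoZeroDivisors R] {I : Ideal A} (hGI : G ⊆ I)
    (hSG : IsSGBasis ord A I G) {b : A} (hb : b ∈ I) :
    SiReduce ord A (Subtype.val '' G) b 0 := by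
  set m := ord.toMonomialOrder
  induction hd : m.toSyn (m.degree (b : MvPolynomial (Fin n) R)) using WellFoundedLT.induction
    generalizing b with
  | _ d ih =>
  by_cases hb0 : (b : MvPolynomial (Fin n) R) = 0
  · rw [hb0]
    exact .refl
  obtain ⟨s, hs, hstep, hlt⟩ := (hSG.isLtCombination_ltm hb).exists_siStep hb0
  refine .head hstep ?_
  rcases hlt with h0 | hlt
  · rw [h0]
  · exact ih _ (hd ▸ hlt) (I.sub_mem hb (Ideal.span_le.2 hGI hs)) rfl

end Reduction

theorem mem_ideal_iff_sireduce_zero_general {n : ℕ} {R : Type*} [CommRing R] [IsDomain R]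
    (ord : TermOrder n)
    (A : Subalgebra R (MvPolynomial (Fin n) R)) (I : Ideal A) (G : Set A)
    (hGI : G ⊆ (I : Set A)) (hSG : IsSGBasis ord A I G) :
    ∀ a : A, a ∈ I ↔ SiReduce ord A (Subtype.val '' G) (a : MvPolynomial (Fin n) R) 0 := by
  intro a
  refine ⟨hSG.siReduce_zero_of_mem hGI, fun h => ?_⟩
  obtain ⟨x, hx, hxa⟩ := h.exists_sub_mem_span
  rw [sub_zero] at hxa
  exact Subtype.val_injective hxa ▸ Ideal.span_le.2 hGI hx

/-- if `G` is an SG-basis for the ideal `I` of `A`, then `a ∈ A`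
belongs to `I` iff `a` si-reduces to `0` via `G`. -/
theorem mem_ideal_iff_sireduce_zero {n : ℕ} {R : Type*} [CommRing R] [IsDomain R]
    [IsNoetherianRing R] (ord : TermOrder n)
    (A : Subalgebra R (MvPolynomial (Fin n) R)) (I : Ideal A) (G : Set A)
    (hGI : G ⊆ (I : Set A)) (hSG : IsSGBasis ord A I G) :
    ∀ a : A, a ∈ I ↔ SiReduce ord A (Subtype.val '' G) (a : MvPolynomial (Fin n) R) 0 :=
  mem_ideal_iff_sireduce_zero_general ord A I G hGI hSG
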